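/- For nonzero real λ and n ≥ 0, the degenerate Dowling number D_{1,λ}(n) satisfies D_{1,λ}(n) = Bel_{n+1,λ} + nλ·Bel_{n,λ}, where Bel_{n,λ} = ∑_{k=0}^{n} S_{2,λ}(n,k) is the n-th degenerate Bell number. -/
import Mathlib


open Finset

noncomputable def dff (lam x : ℝ) (n : ℕ) : ℝ := ∏ i ∈ Finset.range n, (x - i * lam)

noncomputable def drf (lam x : ℝ) (n : ℕ) : ℝ := ∏ i ∈ Finset.range n, (x + i * lam)

lemma dff_zero (lam x : ℝ) : dff lam x 0 = 1 := by simp [dff]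

lemma dff_succ (lam x : ℝ) (n : ℕ) : dff lam x (n+1) = dff lam x n * (x - n * lam) := by
  simp [dff, Finset.prod_range_succ]

lemma dff_one_shift (x : ℝ) (k : ℕ) : dff 1 (x+1) (k+1) = (x+1) * dff 1 x k := by
  rw [dff, Finset.prod_range_succ']
  simp only [Nat.cast_zero, zero_mul, sub_zero]
  rw [mul_comm]
  congr 1
  apply Finset.prod_congr rfl
  intro i _
  push_cast
  ring

lemma f_shift (x : ℝ) (k : ℕ) :
    dff 1 (x+1) (k+1) = dff 1 x (k+1) + ((k:ℝ)+1) * dff 1 x k := by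
  rw [dff_one_shift, dff_succ]
  ring

lemma dff_one_nat_self (k : ℕ) : dff 1 (k : ℝ) k ≠ 0 := by
  rw [dff]
  apply Finset.prod_ne_zero_iff.mpr
  intro i hi
  rw [Finset.mem_range] at hi
  rw [mul_one, sub_ne_zero]
  exact_mod_cast (Nat.ne_of_lt hi).symm

lemma dff_one_nat_zero (j k : ℕ) (h : j < k) : dff 1 (j:ℝ) k = 0 := by
  rw [dff]
  apply Finset.prod_eq_zero (Finset.mem_range.mpr h)
  simp

lemma lin_indep (m : ℕ) (c : ℕ → ℝ)
    (h : ∀ x : ℝ, ∑ k ∈ Finset.range m, c k * dff 1 x k = 0) :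
    ∀ k, k < m → c k = 0 := by
  intro k
  induction k using Nat.strong_induction_on with
  | _ k ih =>
    intro hk
    have hx := h (k : ℝ)
    rw [Finset.sum_eq_single k] at hx
    · rcases mul_eq_zero.mp hx with h1 | h2
      · exact h1
      · exact absurd h2 (dff_one_nat_self k)
    · intro j hj hne
      rcases lt_or_gt_of_ne hne with hlt | hgt
      · rw [ih j hlt (lt_trans hlt hk), zero_mul]
      · rw [dff_one_nat_zero k j hgt, mul_zero]
    · intro hkm
      exact absurd (Finset.mem_range.mpr hk) hkm

theorem stmt14 (lam : ℝ) (hlam : lam ≠ 0) (W S2 : ℕ → ℕ → ℝ)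
    (hW : ∀ (x : ℝ) (n : ℕ), dff lam (x + 1) n =
      ∑ k ∈ Finset.range (n + 1), W n k * dff 1 x k)
    (hS2 : ∀ (x : ℝ) (n : ℕ), dff lam x n =
      ∑ k ∈ Finset.range (n + 1), S2 n k * dff 1 x k)
    (n : ℕ) :
    ∑ k ∈ Finset.range (n + 1), W n k =
      (∑ k ∈ Finset.range (n + 2), S2 (n + 1) k)
      + (n : ℝ) * lam * ∑ k ∈ Finset.range (n + 1), S2 n k := by
  -- coefficients for step 1
  set d : ℕ → ℝ := fun k => if k < n then ((k:ℝ)+1) * S2 n (k+1) else 0 with hd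
  -- Step 1 functional identity:
  have key1 : ∀ x : ℝ, ∑ k ∈ Finset.range (n+1), W n k * dff 1 x k
      = ∑ k ∈ Finset.range (n+1), (S2 n k + d k) * dff 1 x k := by
    intro x
    have e1 : ∑ k ∈ Finset.range (n+1), W n k * dff 1 x k = dff lam (x+1) n := (hW x n).symm
    have e2 : dff lam (x+1) n = ∑ k ∈ Finset.range (n+1), S2 n k * dff 1 (x+1) k := hS2 (x+1) n
    rw [e1, e2]
    rw [Finset.sum_range_succ' (fun k => S2 n k * dff 1 (x+1) k)]
    simp only [f_shift, dff_zero]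
    have : ∑ k ∈ Finset.range n, S2 n (k+1) * (dff 1 x (k+1) + ((k:ℝ)+1) * dff 1 x k)
        = ∑ k ∈ Finset.range n, S2 n (k+1) * dff 1 x (k+1)
          + ∑ k ∈ Finset.range n, (((k:ℝ)+1) * S2 n (k+1)) * dff 1 x k := by
      rw [← Finset.sum_add_distrib]
      apply Finset.sum_congr rfl
      intro k _
      ring
    rw [this]
    rw [show ∑ k ∈ Finset.range (n+1), (S2 n k + d k) * dff 1 x k
        = ∑ k ∈ Finset.range (n+1), S2 n k * dff 1 x k
          + ∑ k ∈ Finset.range (n+1), d k * dff 1 x k by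
      rw [← Finset.sum_add_distrib]; apply Finset.sum_congr rfl; intro k _; ring]
    rw [Finset.sum_range_succ' (fun k => S2 n k * dff 1 x k)]
    rw [Finset.sum_range_succ (fun k => d k * dff 1 x k)]
    have hdn : d n = 0 := by simp [hd]
    rw [hdn, zero_mul, add_zero]
    have : ∑ k ∈ Finset.range n, d k * dff 1 x k
        = ∑ k ∈ Finset.range n, (((k:ℝ)+1) * S2 n (k+1)) * dff 1 x k := by
      apply Finset.sum_congr rfl
      intro k hk
      rw [Finset.mem_range] at hk
      simp [hd, hk]
    rw [this, dff_zero]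
    ring
  -- extract coefficients for step 1
  have hc1 : ∀ k, k < n + 1 → W n k = S2 n k + d k := by
    have := lin_indep (n+1) (fun k => W n k - (S2 n k + d k)) (by
      intro x
      have : ∑ k ∈ Finset.range (n+1), (W n k - (S2 n k + d k)) * dff 1 x k
          = ∑ k ∈ Finset.range (n+1), W n k * dff 1 x k
            - ∑ k ∈ Finset.range (n+1), (S2 n k + d k) * dff 1 x k := by
        rw [← Finset.sum_sub_distrib]; apply Finset.sum_congr rfl; intro k _; ring
      rw [this, key1 x, sub_self])
    intro k hk
    have h0 : W n k - (S2 n k + d k) = 0 := this k hk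
    linarith
  -- coefficients for step 2
  set e : ℕ → ℝ := fun k =>
    (if k = 0 then 0 else S2 n (k-1)) + (if k < n+1 then ((k:ℝ) - n*lam) * S2 n k else 0)
    with he
  have key2 : ∀ x : ℝ, ∑ k ∈ Finset.range (n+2), S2 (n+1) k * dff 1 x k
      = ∑ k ∈ Finset.range (n+2), e k * dff 1 x k := by
    intro x
    have e1 : ∑ k ∈ Finset.range (n+2), S2 (n+1) k * dff 1 x k = dff lam x (n+1) :=
      (hS2 x (n+1)).symm
    rw [e1, dff_succ, hS2 x n, Finset.sum_mul]
    have lhs_eq : ∑ k ∈ Finset.range (n+1), S2 n k * dff 1 x k * (x - (n:ℝ) * lam)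
        = ∑ k ∈ Finset.range (n+1), S2 n k * dff 1 x (k+1)
          + ∑ k ∈ Finset.range (n+1), (((k:ℝ) - (n:ℝ)*lam) * S2 n k) * dff 1 x k := by
      rw [← Finset.sum_add_distrib]
      apply Finset.sum_congr rfl
      intro k _
      rw [dff_succ]
      ring
    rw [lhs_eq]
    rw [show ∑ k ∈ Finset.range (n+2), e k * dff 1 x k
        = ∑ k ∈ Finset.range (n+2), (if k = 0 then 0 else S2 n (k-1)) * dff 1 x k
          + ∑ k ∈ Finset.range (n+2),
              (if k < n+1 then ((k:ℝ) - n*lam) * S2 n k else 0) * dff 1 x k by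
      rw [← Finset.sum_add_distrib]; apply Finset.sum_congr rfl; intro k _
      simp only [he]; ring]
    congr 1
    · rw [Finset.sum_range_succ'
        (fun k => (if k = 0 then 0 else S2 n (k-1)) * dff 1 x k)]
      simp [Nat.add_sub_cancel]
    · rw [Finset.sum_range_succ
        (fun k => (if k < n+1 then ((k:ℝ) - n*lam) * S2 n k else 0) * dff 1 x k)]
      rw [if_neg (lt_irrefl (n+1)), zero_mul, add_zero]
      apply Finset.sum_congr rfl
      intro k hk
      rw [Finset.mem_range] at hk
      rw [if_pos hk]
  have hc2 : ∀ k, k < n + 2 → S2 (n+1) k = e k := by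
    have := lin_indep (n+2) (fun k => S2 (n+1) k - e k) (by
      intro x
      have : ∑ k ∈ Finset.range (n+2), (S2 (n+1) k - e k) * dff 1 x k
          = ∑ k ∈ Finset.range (n+2), S2 (n+1) k * dff 1 x k
            - ∑ k ∈ Finset.range (n+2), e k * dff 1 x k := by
        rw [← Finset.sum_sub_distrib]; apply Finset.sum_congr rfl; intro k _; ring
      rw [this, key2 x, sub_self])
    intro k hk
    have h0 : S2 (n+1) k - e k = 0 := this k hk
    linarith
  -- Now sum the coefficient identities.
  have sumW : ∑ k ∈ Finset.range (n+1), W n k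
      = ∑ k ∈ Finset.range (n+1), S2 n k + ∑ k ∈ Finset.range n, ((k:ℝ)+1) * S2 n (k+1) := by
    rw [Finset.sum_congr rfl (fun k hk => hc1 k (Finset.mem_range.mp hk))]
    rw [Finset.sum_add_distrib]
    congr 1
    rw [Finset.sum_range_succ]
    have hdn : d n = 0 := by simp [hd]
    rw [hdn, add_zero]
    apply Finset.sum_congr rfl
    intro k hk
    rw [Finset.mem_range] at hk
    simp [hd, hk]
  have sumS : ∑ k ∈ Finset.range (n+2), S2 (n+1) k
      = ∑ k ∈ Finset.range (n+1), S2 n k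
        + ∑ k ∈ Finset.range (n+1), ((k:ℝ) - n*lam) * S2 n k := by
    rw [Finset.sum_congr rfl (fun k hk => hc2 k (Finset.mem_range.mp hk))]
    simp only [he]
    rw [Finset.sum_add_distrib]
    congr 1
    · rw [Finset.sum_range_succ' (fun k => if k = 0 then (0:ℝ) else S2 n (k-1))]
      simp [Nat.add_sub_cancel]
    · rw [Finset.sum_range_succ (fun k => if k < n+1 then ((k:ℝ) - n*lam) * S2 n k else 0)]
      rw [if_neg (lt_irrefl (n+1)), add_zero]
      apply Finset.sum_congr rfl
      intro k hk
      rw [Finset.mem_range] at hk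
      rw [if_pos hk]
  -- reindexing: ∑_{k<n+1} k * S2 n k = ∑_{k<n} (k+1) * S2 n (k+1)
  have reidx : ∑ k ∈ Finset.range (n+1), (k:ℝ) * S2 n k
      = ∑ k ∈ Finset.range n, ((k:ℝ)+1) * S2 n (k+1) := by
    rw [Finset.sum_range_succ' (fun k => (k:ℝ) * S2 n k)]
    push_cast
    simp
  have expand : ∑ k ∈ Finset.range (n+1), ((k:ℝ) - n*lam) * S2 n k
      = ∑ k ∈ Finset.range (n+1), (k:ℝ) * S2 n k
        - (n:ℝ) * lam * ∑ k ∈ Finset.range (n+1), S2 n k := by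
    rw [Finset.mul_sum, ← Finset.sum_sub_distrib]
    apply Finset.sum_congr rfl
    intro k _
    ring
  rw [sumW, sumS, expand, reidx]
  ring
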